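/- arXiv:1809.08864 — 2 statements merged into one kernel-verified Lean document; each statement's English description precedes it below -/
import Mathlib

section
/- Let m ≥ 1 and let l_1, …, l_m be positive integers with l_1 + ⋯ + l_m = N. There exists a constant C > 0 (depending only on N) such that for every integer p ≥ 1 and every z = (z^{(1)}, …, z^{(m)}) with z^{(j)} ∈ ℂ^{l_j}, one has ∑ ∏_{j=1}^m ((l_j - 1 + |β_j|)! / ((l_j - 1)! · β_j!)) · |(z^{(j)})^{β_j}|^2 ≤ C · p^{2N} · (max_{1 ≤ j ≤ m} ‖z^{(j)}‖_2)^{2p}, where the sum runs over all m-tuples (β_1, …, β_m) of multi-indices, β_j ∈ ℕ^{l_j}, with |β_1| + ⋯ + |β_m| = p. -/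
/-!
Summing the weighted monomials of a fixed degree `q` over one ball `𝔹_k` is the multinomial
theorem: the result is `C(k - 1 + q, q) ‖z‖₂^(2q)`, and `C(k - 1 + q, q) ≤ (q + 1)^k`.
Over the product of balls the inner sum factors, so each of the at most `(p + 1)^m`
degree splittings `q` contributes at most `(p + 1)^N M^(2p)`, where `M = max_j ‖z^{(j)}‖₂`.
Since `m ≤ N`, the total is at most `(p + 1)^(2N) M^(2p) ≤ 4^N p^(2N) M^(2p)`.
-/

open Finset

/-- The reciprocal of `‖z^β‖²` in the Hardy space `H²(𝔹_k)`. -/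
noncomputable def hardyBallWeight (k : ℕ) (β : Fin k → ℕ) : ℝ :=
  (Nat.factorial (k - 1 + ∑ i, β i) : ℝ) /
    ((Nat.factorial (k - 1) : ℝ) * ∏ i, (Nat.factorial (β i) : ℝ))

theorem Nat.choose_sub_one_add_le_succ_pow (k q : ℕ) : (k - 1 + q).choose q ≤ (q + 1) ^ k := by
  rw [add_comm, Nat.choose_symm_add]
  exact (Nat.choose_add_le_add_one_pow q (k - 1)).trans
    (Nat.pow_le_pow_right q.succ_pos (k.sub_le 1))

theorem Finset.Nat.card_antidiagonalTuple_le (k n : ℕ) :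
    #(Nat.antidiagonalTuple k n) ≤ (n + 1) ^ k := by
  have hsub : Nat.antidiagonalTuple k n ⊆ Fintype.piFinset fun _ : Fin k => range (n + 1) := by
    intro x hx
    rw [Nat.mem_antidiagonalTuple] at hx
    simp only [Fintype.mem_piFinset, mem_range, Nat.lt_succ_iff]
    exact fun i => hx ▸ single_le_sum (fun j _ => (x j).zero_le) (mem_univ i)
  simpa using card_le_card hsub

section Hardy

variable {𝕜 : Type*} [NormedField 𝕜]

theorem sum_hardyBallWeight_mul_norm_sq (k q : ℕ) (z : Fin k → 𝕜) :
    ∑ β ∈ Nat.antidiagonalTuple k q, hardyBallWeight k β * ‖∏ i, z i ^ β i‖ ^ 2 =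
      ((k - 1 + q).choose q : ℝ) * (∑ i, ‖z i‖ ^ 2) ^ q := by
  rw [sum_pow_eq_sum_piAntidiag, piAntidiag_univ_fin_eq_antidiagonalTuple, mul_sum]
  refine sum_congr rfl fun β hβ => ?_
  have hq : ∑ i, β i = q := Nat.mem_antidiagonalTuple.mp hβ
  have hnorm : ‖∏ i, z i ^ β i‖ ^ 2 = ∏ i, (‖z i‖ ^ 2) ^ β i := by
    simp only [norm_prod, norm_pow, ← prod_pow, ← pow_mul, mul_comm]
  have hmultinomial : (∏ i, (Nat.factorial (β i) : ℝ)) * Nat.multinomial univ β =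
      Nat.factorial q := by
    rw [← hq]
    exact_mod_cast Nat.multinomial_spec univ β
  rw [hardyBallWeight, hq, hnorm, Nat.cast_choose ℝ (Nat.le_add_left q (k - 1)),
    Nat.add_sub_cancel, ← hmultinomial]
  have : (Nat.multinomial univ β : ℝ) ≠ 0 := Nat.cast_ne_zero.mpr (Nat.multinomial_pos _ _).ne'
  have : (∏ i, (Nat.factorial (β i) : ℝ)) ≠ 0 := by positivity
  field_simp

theorem sum_piFinset_prod_hardyBallWeight_mul_norm_sq {ι : Type*} [Fintype ι] [DecidableEq ι]
    (l q : ι → ℕ) (z : (j : ι) → Fin (l j) → 𝕜) :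
    ∑ β ∈ Fintype.piFinset (fun j => Nat.antidiagonalTuple (l j) (q j)),
        ∏ j, hardyBallWeight (l j) (β j) * ‖∏ i, z j i ^ β j i‖ ^ 2 =
      ∏ j, ((l j - 1 + q j).choose (q j) : ℝ) * (∑ i, ‖z j i‖ ^ 2) ^ q j := by
  simp_rw [← sum_hardyBallWeight_mul_norm_sq, prod_univ_sum]

end Hardy

theorem prod_choose_mul_pow_le {ι : Type*} [Fintype ι] (l q : ι → ℕ) {p : ℕ}
    (hq : ∑ j, q j = p) {s : ι → ℝ} {r : ℝ} (hs₀ : ∀ j, 0 ≤ s j) (hs : ∀ j, s j ≤ r) :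
    ∏ j, ((l j - 1 + q j).choose (q j) : ℝ) * s j ^ q j ≤ ((p : ℝ) + 1) ^ (∑ j, l j) * r ^ p := by
  have hqp : ∀ j, q j ≤ p := fun j => hq ▸ single_le_sum (fun i _ => (q i).zero_le) (mem_univ j)
  calc ∏ j, ((l j - 1 + q j).choose (q j) : ℝ) * s j ^ q j
      ≤ ∏ j, ((p : ℝ) + 1) ^ l j * r ^ q j := by
        refine prod_le_prod (fun j _ => mul_nonneg (by positivity) (pow_nonneg (hs₀ j) _))
          fun j _ => ?_
        have hchoose : ((l j - 1 + q j).choose (q j) : ℝ) ≤ ((p : ℝ) + 1) ^ l j := by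
          exact_mod_cast (Nat.choose_sub_one_add_le_succ_pow _ _).trans
            (Nat.pow_le_pow_left (Nat.succ_le_succ (hqp j)) _)
        exact mul_le_mul hchoose (pow_le_pow_left₀ (hs₀ j) (hs j) _)
          (pow_nonneg (hs₀ j) _) (by positivity)
    _ = ((p : ℝ) + 1) ^ (∑ j, l j) * r ^ p := by
        rw [prod_mul_distrib, prod_pow_eq_pow_sum, prod_pow_eq_pow_sum, hq]

theorem add_one_pow_add_le_four_pow_mul_pow {m N : ℕ} (hmN : m ≤ N) {x : ℝ} (hx : 1 ≤ x) :
    (x + 1) ^ (m + N) ≤ 4 ^ N * x ^ (2 * N) :=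
  calc (x + 1) ^ (m + N) ≤ (2 * x) ^ (m + N) := by gcongr; linarith
    _ ≤ (2 * x) ^ (2 * N) := pow_le_pow_right₀ (by linarith) (by omega)
    _ = 4 ^ N * x ^ (2 * N) := by rw [mul_pow, pow_mul]; norm_num

theorem stmt8_general (N m : ℕ) (l : Fin m → ℕ) (hl : ∀ j, 1 ≤ l j)
    (hsum : ∑ j, l j = N) :
    ∃ C : ℝ, 0 < C ∧ ∀ p : ℕ, 1 ≤ p → ∀ z : (j : Fin m) → Fin (l j) → ℂ,
      ∑ q ∈ Finset.Nat.antidiagonalTuple m p,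
        ∑ β ∈ Fintype.piFinset (fun j => Finset.Nat.antidiagonalTuple (l j) (q j)),
          ∏ j, (((Nat.factorial (l j - 1 + ∑ i, β j i) : ℝ) /
                ((Nat.factorial (l j - 1) : ℝ) * ∏ i, (Nat.factorial (β j i) : ℝ))) *
              ‖∏ i, z j i ^ β j i‖ ^ 2)
        ≤ C * (p : ℝ) ^ (2 * N) *
            (⨆ j, Real.sqrt (∑ i, ‖z j i‖ ^ 2)) ^ (2 * p) := by
  refine ⟨4 ^ N, by positivity, fun p hp z => ?_⟩
  set M := ⨆ j, Real.sqrt (∑ i, ‖z j i‖ ^ 2)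
  have hball : ∀ j, ∑ i, ‖z j i‖ ^ 2 ≤ M ^ 2 := fun j =>
    (Real.sqrt_le_iff.mp
      (le_ciSup (f := fun j => Real.sqrt (∑ i, ‖z j i‖ ^ 2)) (Finite.bddAbove_range _) j)).2
  have hmN : m ≤ N := by
    simpa [hsum] using sum_le_sum fun j (_ : j ∈ univ) => hl j
  calc _ = ∑ q ∈ Nat.antidiagonalTuple m p,
        ∏ j, ((l j - 1 + q j).choose (q j) : ℝ) * (∑ i, ‖z j i‖ ^ 2) ^ q j :=
        sum_congr rfl fun q _ => sum_piFinset_prod_hardyBallWeight_mul_norm_sq l q z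
    _ ≤ ∑ _q ∈ Nat.antidiagonalTuple m p, ((p : ℝ) + 1) ^ N * (M ^ 2) ^ p :=
        sum_le_sum fun q hq => hsum ▸ prod_choose_mul_pow_le l q
          (Nat.mem_antidiagonalTuple.mp hq) (fun j => by positivity) hball
    _ ≤ ((p : ℝ) + 1) ^ m * (((p : ℝ) + 1) ^ N * (M ^ 2) ^ p) := by
        rw [sum_const, nsmul_eq_mul]
        gcongr
        exact_mod_cast Nat.card_antidiagonalTuple_le m p
    _ = ((p : ℝ) + 1) ^ (m + N) * (M ^ 2) ^ p := by ring
    _ ≤ 4 ^ N * (p : ℝ) ^ (2 * N) * M ^ (2 * p) := by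
        rw [pow_mul M]
        gcongr
        exact add_one_pow_add_le_four_pow_mul_pow hmN (Nat.one_le_cast.mpr hp)

/-- Let `l_1, …, l_m` be positive integers with `l_1 + ⋯ + l_m = N`. There is a constant
`C > 0` (depending only on `N`) such that for every `p ≥ 1` and every
`z = (z^{(1)}, …, z^{(m)})` with `z^{(j)} ∈ ℂ^{l_j}`, the sum over all tuples
`(β_1, …, β_m)` of multi-indices with `|β_1| + ⋯ + |β_m| = p` of
`∏_j ((l_j - 1 + |β_j|)!/((l_j - 1)!·β_j!)) |(z^{(j)})^{β_j}|²` is at most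
`C · p^(2N) · (max_j ‖z^{(j)}‖₂)^(2p)`. The tuples are enumerated by first choosing
`q = (|β_1|, …, |β_m|)` with `∑ q_j = p` and then each `β_j` with `|β_j| = q_j`. -/
theorem stmt8 (N m : ℕ) (hm : 1 ≤ m) (l : Fin m → ℕ) (hl : ∀ j, 1 ≤ l j)
    (hsum : ∑ j, l j = N) :
    ∃ C : ℝ, 0 < C ∧ ∀ p : ℕ, 1 ≤ p → ∀ z : (j : Fin m) → Fin (l j) → ℂ,
      ∑ q ∈ Finset.Nat.antidiagonalTuple m p,
        ∑ β ∈ Fintype.piFinset (fun j => Finset.Nat.antidiagonalTuple (l j) (q j)),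
          ∏ j, (((Nat.factorial (l j - 1 + ∑ i, β j i) : ℝ) /
                ((Nat.factorial (l j - 1) : ℝ) * ∏ i, (Nat.factorial (β j i) : ℝ))) *
              ‖∏ i, z j i ^ β j i‖ ^ 2)
        ≤ C * (p : ℝ) ^ (2 * N) *
            (⨆ j, Real.sqrt (∑ i, ‖z j i‖ ^ 2)) ^ (2 * p) :=
  stmt8_general N m l hl hsum
end

section
/- There is no constant C > 0 such that for every polynomial P ∈ ℂ[X, Y] one has (1/(2π)) ∫_0^{2π} |P(e^{is}, e^{is})|^2 ds ≤ C · (1/(2π)^2) ∫_0^{2π} ∫_0^{2π} |P(e^{is}, e^{it})|^2 ds dt. -/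
/-!
On the diagonal `z₁ = z₂ = z` the polynomial `f_n = ∑_{j ≤ n} z₁ʲ z₂ⁿ⁻ʲ` collapses to
`(n + 1) zⁿ`, whose mean square on the circle is `(n + 1)²`. On the torus the `n + 1` monomials
of `f_n` are orthonormal, so its mean square there is only `n + 1`. The ratio `n + 1` is unbounded.
-/

open Complex Finset MvPolynomial intervalIntegral
open Real (pi)
open scoped ComplexConjugate

theorem integral_exp_int_mul_mul_I (m : ℤ) :
    ∫ t in (0 : ℝ)..2 * pi, exp (m * t * I) = if m = 0 then (2 * pi : ℂ) else 0 := by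
  split_ifs with hm
  · simp [hm]
  · have hc : (m : ℂ) * I ≠ 0 := mul_ne_zero (Int.cast_ne_zero.2 hm) I_ne_zero
    simp_rw [mul_right_comm _ _ I]
    rw [integral_exp_mul_complex hc]
    have : (m : ℂ) * I * ((2 * pi : ℝ) : ℂ) = m * (2 * pi * I) := by push_cast; ring
    rw [this, exp_int_mul_two_pi_mul_I]
    simp

theorem integral_norm_sq_sum_exp {ι : Type*} (s : Finset ι) {e : ι → ℤ} (he : Set.InjOn e s)
    (c : ι → ℂ) :
    ∫ t in (0 : ℝ)..2 * pi, ‖∑ i ∈ s, c i * exp (e i * t * I)‖ ^ 2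
      = 2 * pi * ∑ i ∈ s, ‖c i‖ ^ 2 := by
  have hexpand : ∀ t : ℝ, ((‖∑ i ∈ s, c i * exp (e i * t * I)‖ ^ 2 : ℝ) : ℂ) =
      ∑ i ∈ s, ∑ j ∈ s, c i * conj (c j) * exp ((e i - e j : ℤ) * t * I) := by
    intro t
    rw [ofReal_pow, ← mul_conj', map_sum, sum_mul_sum]
    refine sum_congr rfl fun i _ => sum_congr rfl fun j _ => ?_
    rw [map_mul, ← exp_conj, mul_mul_mul_comm, ← exp_add]
    simp only [map_mul, conj_ofReal, conj_I, map_intCast]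
    push_cast
    ring_nf
  have hdiag : ∀ i ∈ s, ∀ j ∈ s, e i - e j = 0 ↔ i = j := fun i hi j hj =>
    ⟨fun h => he hi hj (sub_eq_zero.1 h), fun h => by simp [h]⟩
  apply ofReal_injective
  rw [← intervalIntegral.integral_ofReal]
  simp_rw [hexpand]
  have hcont : ∀ i j, Continuous fun t : ℝ => c i * conj (c j) * exp ((e i - e j : ℤ) * t * I) :=
    fun i j => by fun_prop
  rw [integral_finsetSum fun i _ =>
    (continuous_finsetSum s fun j _ => hcont i j).intervalIntegrable _ _]
  simp_rw [integral_finsetSum fun j _ => (hcont _ j).intervalIntegrable _ _, integral_const_mul,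
    integral_exp_int_mul_mul_I]
  push_cast
  rw [mul_sum]
  refine sum_congr rfl fun i hi => ?_
  rw [sum_eq_single_of_mem i hi fun j hj hji => by simp [hdiag i hi j hj, Ne.symm hji]]
  simp [mul_conj']
  ring

noncomputable def sumMonomialsOfDegree (R : Type*) [CommSemiring R] (n : ℕ) :
    MvPolynomial (Fin 2) R :=
  ∑ j ∈ range (n + 1), X 0 ^ j * X 1 ^ (n - j)

section sumMonomialsOfDegree

variable {R : Type*} [CommSemiring R]

theorem eval_sumMonomialsOfDegree (w z : R) (n : ℕ) :
    eval ![w, z] (sumMonomialsOfDegree R n) = ∑ k ∈ range (n + 1), w ^ (n - k) * z ^ k := by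
  rw [sumMonomialsOfDegree, map_sum, ← sum_range_reflect]
  refine sum_congr rfl fun k hk => ?_
  rw [mem_range] at hk
  simp [Nat.sub_sub_self (Nat.le_of_lt_succ hk)]

theorem eval_const_sumMonomialsOfDegree (z : R) (n : ℕ) :
    eval (fun _ => z) (sumMonomialsOfDegree R n) = (n + 1) * z ^ n := by
  rw [sumMonomialsOfDegree, map_sum, sum_congr rfl fun j hj => by
    rw [map_mul, map_pow, map_pow, eval_X, eval_X, ← pow_add,
      Nat.add_sub_cancel' (Nat.le_of_lt_succ (mem_range.1 hj))]]
  simp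

end sumMonomialsOfDegree

theorem integral_norm_sq_eval_const_sumMonomialsOfDegree (n : ℕ) :
    ∫ s in (0 : ℝ)..2 * pi, ‖eval (fun _ => exp (I * s)) (sumMonomialsOfDegree ℂ n)‖ ^ 2
      = 2 * pi * (n + 1) ^ 2 := by
  simp_rw [eval_const_sumMonomialsOfDegree, norm_mul, norm_pow, norm_exp_I_mul_ofReal]
  norm_cast
  simp

theorem integral_norm_sq_eval_sumMonomialsOfDegree (n : ℕ) (s : ℝ) :
    ∫ t in (0 : ℝ)..2 * pi, ‖eval ![exp (I * s), exp (I * t)] (sumMonomialsOfDegree ℂ n)‖ ^ 2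
      = 2 * pi * (n + 1) := by
  have hpow : ∀ (t : ℝ) (k : ℕ), exp (I * t) ^ k = exp (((k : ℤ) : ℂ) * t * I) := fun t k => by
    rw [← exp_nat_mul]; push_cast; ring_nf
  have hw : ‖exp (I * s)‖ = 1 := norm_exp_I_mul_ofReal s
  generalize exp (I * s) = w at hw ⊢
  simp_rw [eval_sumMonomialsOfDegree, hpow]
  rw [integral_norm_sq_sum_exp _ Nat.cast_injective.injOn]
  simp [hw]

/-- There is no constant `C > 0` such that for every polynomial `P ∈ ℂ[X, Y]` one has
`(1/(2π)) ∫₀^{2π} |P(e^{is}, e^{is})|² ds ≤ C · (1/(2π)²) ∫₀^{2π}∫₀^{2π} |P(e^{is}, e^{it})|² ds dt`,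
i.e. the Schur map `φ(z₁, z₂) = (z₁, z₁)` does not induce a bounded composition operator on
`H²(𝔻²)`. -/
theorem stmt10 :
    ¬ ∃ C : ℝ, 0 < C ∧ ∀ P : MvPolynomial (Fin 2) ℂ,
      (1 / (2 * Real.pi)) *
          (∫ s in (0:ℝ)..(2 * Real.pi),
            ‖MvPolynomial.eval (fun _ => Complex.exp (Complex.I * (s : ℂ))) P‖ ^ 2)
        ≤ C * ((1 / (2 * Real.pi) ^ 2) *
          (∫ s in (0:ℝ)..(2 * Real.pi), ∫ t in (0:ℝ)..(2 * Real.pi),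
            ‖MvPolynomial.eval
                ![Complex.exp (Complex.I * (s : ℂ)), Complex.exp (Complex.I * (t : ℂ))] P‖ ^ 2)) := by
  rintro ⟨C, -, hC⟩
  set n := ⌈C⌉₊
  have h := hC (sumMonomialsOfDegree ℂ n)
  simp_rw [integral_norm_sq_eval_const_sumMonomialsOfDegree,
    integral_norm_sq_eval_sumMonomialsOfDegree, integral_const, smul_eq_mul, sub_zero] at h
  have hsq : ((n : ℝ) + 1) ^ 2 ≤ C * (n + 1) := by
    convert h using 1 <;> field_simp
  nlinarith [Nat.le_ceil C]
end
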